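/- Let m > 4 and let k ≥ l ≥ 0 be integers. Then for every H ∈ ℋ_{k,l}, the (k−l+1)-fold iterate of the operator S_u annihilates H: S_u^{k−l+1} H = 0. Moreover, for every integer 0 ≤ j ≤ k−l there exists H ∈ ℋ_{k,l} with S_u^{j} H ≠ 0. -/

import Mathlib

open MvPolynomial

noncomputable section

/-- Polynomials in two vector variables `x = (x_1,…,x_m)` (the `Sum.inl` variables)
and `u = (u_1,…,u_m)` (the `Sum.inr` variables), with complex coefficients. -/
abbrev PP (m : ℕ) := MvPolynomial (Fin m ⊕ Fin m) ℂ

/-- The Laplace operator `Δ_x` in the `x`-variables. -/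
def lapX (m : ℕ) (P : PP m) : PP m :=
  ∑ j : Fin m, pderiv (Sum.inl j) (pderiv (Sum.inl j) P)

/-- The Laplace operator `Δ_u` in the `u`-variables. -/
def lapU (m : ℕ) (P : PP m) : PP m :=
  ∑ j : Fin m, pderiv (Sum.inr j) (pderiv (Sum.inr j) P)

/-- The mixed operator `⟨∂_u,∂_x⟩ = Σ_j ∂_{u_j} ∂_{x_j}`. -/
def dudx (m : ℕ) (P : PP m) : PP m :=
  ∑ j : Fin m, pderiv (Sum.inr j) (pderiv (Sum.inl j) P)

/-- The operator `⟨x,∂_u⟩ = Σ_j x_j ∂_{u_j}`. -/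
def xdu (m : ℕ) (P : PP m) : PP m :=
  ∑ j : Fin m, X (Sum.inl j) * pderiv (Sum.inr j) P

/-- The operator `⟨u,∂_x⟩ = Σ_j u_j ∂_{x_j}`. -/
def udx (m : ℕ) (P : PP m) : PP m :=
  ∑ j : Fin m, X (Sum.inr j) * pderiv (Sum.inl j) P

/-- The polynomial `|x|² = Σ_j x_j²`. -/
def nx2 (m : ℕ) : PP m := ∑ j : Fin m, X (Sum.inl j) ^ 2

/-- The polynomial `|u|² = Σ_j u_j²`. -/
def nu2 (m : ℕ) : PP m := ∑ j : Fin m, X (Sum.inr j) ^ 2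

/-- The polynomial `⟨u,x⟩ = Σ_j u_j x_j`. -/
def uxP (m : ℕ) : PP m := ∑ j : Fin m, X (Sum.inr j) * X (Sum.inl j)

/-- `P` is homogeneous of degree `p` in the `x`-variables and `q` in the `u`-variables. -/
def IsBihom (m p q : ℕ) (P : PP m) : Prop :=
  P.IsWeightedHomogeneous (Sum.elim (fun _ => 1) (fun _ => 0)) p ∧
  P.IsWeightedHomogeneous (Sum.elim (fun _ => 0) (fun _ => 1)) q

/-- `P` belongs to the space `ℋ_{k,l}` of simplicial harmonics. -/
def IsSimp (m k l : ℕ) (P : PP m) : Prop :=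
  IsBihom m k l P ∧ lapX m P = 0 ∧ lapU m P = 0 ∧ dudx m P = 0 ∧ xdu m P = 0

/-- The transvector generator `S_x` taken on bidegree `(p,·)`. -/
def opSx (m : ℕ) (p : ℤ) (P : PP m) : PP m :=
  xdu m P - (2 * (p : ℂ) + m - 2)⁻¹ • (nx2 m * dudx m P)

/-- The transvector generator `S_u` taken on bidegree `(·,q)`. -/
def opSu (m : ℕ) (q : ℤ) (P : PP m) : PP m :=
  udx m P - (2 * (q : ℂ) + m - 2)⁻¹ • (nu2 m * dudx m P)

/-- The transvector generator `A = ⟨∂_u,∂_x⟩`. -/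
def opA (m : ℕ) (P : PP m) : PP m := dudx m P

/-- The transvector generator `C` taken on bidegree `(p,q)`. -/
def opC (m : ℕ) (p q : ℤ) (P : PP m) : PP m :=
  uxP m * P - (2 * (p : ℂ) + m - 2)⁻¹ • (nx2 m * udx m P)
    - (2 * (q : ℂ) + m - 2)⁻¹ • (nu2 m * xdu m P)
    + ((2 * (p : ℂ) + m - 2) * (2 * (q : ℂ) + m - 2))⁻¹ • (nx2 m * (nu2 m * dudx m P))

/-- `SuIter m n q P`: apply `S_u` `n` times to `P`, starting at `u`-degree `q`
(each application raises the `u`-degree by one). -/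
def SuIter (m : ℕ) : ℕ → ℤ → PP m → PP m
  | 0, _, P => P
  | n+1, q, P => SuIter m n (q+1) (opSu m q P)

/-- `SxIter m n p P`: apply `S_x` `n` times to `P`, starting at `x`-degree `p`
(each application raises the `x`-degree by one). -/
def SxIter (m : ℕ) : ℕ → ℤ → PP m → PP m
  | 0, _, P => P
  | n+1, p, P => SxIter m n (p+1) (opSx m p P)

/-- `CIter m n p q P`: apply `C` `n` times to `P`, starting at bidegree `(p,q)`. -/
def CIter (m : ℕ) : ℕ → ℤ → ℤ → PP m → PP m
  | 0, _, _, P => P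
  | n+1, p, q, P => CIter m n (p+1) (q+1) (opC m p q P)

/-- `AIter m n P`: apply `A` `n` times to `P`. -/
def AIter (m : ℕ) (n : ℕ) (P : PP m) : PP m := (opA m)^[n] P

/-- The rising factorial `a^{(n)} = a(a+1)⋯(a+n-1)`. -/
def asc (a : ℂ) : ℕ → ℂ
  | 0 => 1
  | n+1 => asc a n * (a + n)

/-- The falling factorial `a_{(n)} = a(a-1)⋯(a-n+1)`. -/
def desc (a : ℂ) : ℕ → ℂ
  | 0 => 1
  | n+1 => desc a n * (a - n)

/-!
The operators `⟨x,∂_u⟩`, `⟨u,∂_x⟩` and the difference `E_x - E_u` of the Euler operators are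
derivations forming an `sl₂`-triple `(h, e, f) = (E_x - E_u, ⟨x,∂_u⟩, ⟨u,∂_x⟩)`. Since `⟨u,∂_x⟩`
commutes with `Δ_x` and `[⟨∂_u,∂_x⟩, ⟨u,∂_x⟩] = Δ_x`, the correction term of `S_u` vanishes at
every step on `ℋ_{k,l}`, so `S_u^j` acts there as `⟨u,∂_x⟩^j`. A nonzero `H ∈ ℋ_{k,l}` is a
primitive vector of weight `k - l`, on which `f` is nilpotent because it lowers the `x`-degree;
the `sl₂` relations then force `f^{k-l+1} H = 0`.

For the lower bound take orthogonal isotropic vectors `a₀, a₁` (this needs `m ≥ 4`) and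
`H = ⟨a₀,x⟩^{k-l} (⟨a₀,x⟩⟨a₁,u⟩ - ⟨a₁,x⟩⟨a₀,u⟩)^l`. Every polynomial in the `⟨a_p,x⟩, ⟨a_p,u⟩`
is killed by `Δ_x`, `Δ_u` and `⟨∂_u,∂_x⟩`, and `⟨u,∂_x⟩^j H` is a nonzero multiple of
`⟨a₀,u⟩^j ⟨a₀,x⟩^{k-l-j} (…)^l` for `j ≤ k - l`.
-/

namespace MvPolynomial

variable {R σ : Type*} [CommRing R]

theorem pderiv_pderiv_comm (i j : σ) (p : MvPolynomial σ R) :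
    pderiv i (pderiv j p) = pderiv j (pderiv i p) := by
  have h : ⁅pderiv i, pderiv j⁆ = (0 : Derivation R (MvPolynomial σ R) (MvPolynomial σ R)) :=
    derivation_ext fun k => by
      classical rw [Derivation.commutator_apply]; simp [pderiv_X, Pi.single_apply, apply_ite]
  have := congrArg (· p) h
  simp only [Derivation.commutator_apply] at this
  exact sub_eq_zero.mp this

theorem IsWeightedHomogeneous.pderiv_eq_zero {w : σ → ℕ} {φ : MvPolynomial σ R}
    (h : φ.IsWeightedHomogeneous w 0) {i : σ} (hi : w i ≠ 0) : pderiv i φ = 0 := by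
  refine pderiv_eq_zero_of_notMem_vars fun hvar => ?_
  obtain ⟨d, hd, hid⟩ := (mem_vars_iff_mem_support i).mp hvar
  have := Finsupp.le_weight w hi d
  rw [h (mem_support_iff.mp hd)] at this
  exact (Finsupp.mem_support_iff.mp hid) (by omega)

theorem pderiv_pderiv_eq_neg {s t s' t' : σ} {P : MvPolynomial σ ℂ}
    (h : pderiv t P = Complex.I • pderiv s P) (h' : pderiv t' P = Complex.I • pderiv s' P) :
    pderiv t' (pderiv t P) = -pderiv s' (pderiv s P) := by
  rw [h, Derivation.map_smul, pderiv_pderiv_comm, h', Derivation.map_smul, smul_smul,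
    Complex.I_mul_I, neg_one_smul, pderiv_pderiv_comm]

end MvPolynomial

namespace Derivation

variable {R A : Type*} [CommSemiring R] [CommSemiring A] [Algebra R A]

theorem sum_apply {M ι : Type*} [AddCommMonoid M] [Module A M] [Module R M] (s : Finset ι)
    (D : ι → Derivation R A M) (a : A) : (∑ i ∈ s, D i) a = ∑ i ∈ s, D i a := by
  rw [← Finset.sum_apply a s (fun i => ⇑(D i))]
  exact congrFun (map_sum coeFnAddMonoidHom D s) a

def kerSubalgebra (D : Derivation R A A) : Subalgebra R A where
  carrier := {a | D a = 0}
  mul_mem' ha hb := by simp_all [leibniz]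
  add_mem' ha hb := by simp_all
  algebraMap_mem' := D.map_algebraMap

theorem iterate_apply_pow_mul (D : Derivation R A A) {a c w : A} (ha : D a = c) (hc : D c = 0)
    (hw : D w = 0) (n j : ℕ) :
    (⇑D)^[j] (a ^ n * w) = n.descFactorial j • (c ^ j * a ^ (n - j) * w) := by
  induction j with
  | zero => simp
  | succ j ih =>
    rw [Function.iterate_succ_apply', ih, map_nsmul, leibniz, leibniz, leibniz_pow,
      leibniz_pow, ha, hc, hw, Nat.descFactorial_succ, mul_nsmul']
    rcases Nat.lt_or_ge j n with hj | hj
    · obtain ⟨r, hr⟩ : ∃ r, n - j = r + 1 := ⟨n - j - 1, by omega⟩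
      rw [hr, show n - (j + 1) = r by omega]
      simp only [smul_eq_mul, nsmul_eq_mul, Nat.add_sub_cancel, Nat.cast_add, Nat.cast_one]
      ring
    · simp [show n - j = 0 by omega]

end Derivation

/- Versions of `exists_nat` and `pow_toEnd_f_eq_zero_of_eq_nat` in which finite-dimensionality
of `M` is replaced by nilpotency of `f` on the primitive vector. -/
namespace IsSl2Triple.HasPrimitiveVectorWith

open LieModule

variable {R L M : Type*} [CommRing R] [LieRing L] [LieAlgebra R L]
  [AddCommGroup M] [Module R M] [LieRingModule L M] [LieModule R L M]
  [IsDomain R] [CharZero R] [Module.IsTorsionFree R M]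
  {h e f : L} {t : IsSl2Triple h e f} {m : M} {μ : R}

theorem exists_nat_of_pow_toEnd_f_eq_zero (P : t.HasPrimitiveVectorWith m μ) {N : ℕ}
    (hN : (toEnd R L M f ^ N) m = 0) : ∃ n : ℕ, μ = n := by
  have hvanish : ∃ k, (toEnd R L M f ^ k) m = 0 := ⟨N, hN⟩
  obtain ⟨n, hn, hn_succ⟩ := Nat.exists_not_and_succ_of_not_zero_of_exists P.ne_zero hvanish
  refine ⟨n, ?_⟩
  have := P.lie_e_pow_succ_toEnd_f n
  rw [hn_succ, lie_zero, eq_comm, smul_eq_zero_iff_left hn, mul_eq_zero, sub_eq_zero] at this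
  exact this.resolve_left (Nat.cast_add_one_ne_zero n)

theorem pow_toEnd_f_eq_zero_of_eq_nat_of_pow_toEnd_f_eq_zero (P : t.HasPrimitiveVectorWith m μ)
    {n N : ℕ} (hn : μ = n) (hN : (toEnd R L M f ^ N) m = 0) :
    (toEnd R L M f ^ (n + 1)) m = 0 := by
  by_contra hne
  have P' : t.HasPrimitiveVectorWith ((toEnd R L M f ^ (n + 1)) m) (n - 2 * (n + 1) : R) :=
    { ne_zero := hne
      lie_h := (P.lie_h_pow_toEnd_f _).trans (by simp [hn])
      lie_e := (P.lie_e_pow_succ_toEnd_f _).trans (by simp [hn]) }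
  obtain ⟨k, hk⟩ := P'.exists_nat_of_pow_toEnd_f_eq_zero (N := N) (by
    rw [← Module.End.mul_apply, ← pow_add, add_comm, pow_add, Module.End.mul_apply, hN,
      map_zero])
  have : (n : ℤ) < k + 2 * (n + 1) := by lia
  exact this.ne (Int.cast_injective (α := R) <| by simpa [sub_eq_iff_eq_add] using hk)

end IsSl2Triple.HasPrimitiveVectorWith

variable {m : ℕ}

def udxDerivation (m : ℕ) : Derivation ℂ (PP m) (PP m) :=
  ∑ j : Fin m, (X (Sum.inr j) : PP m) • pderiv (Sum.inl j)

def xduDerivation (m : ℕ) : Derivation ℂ (PP m) (PP m) :=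
  ∑ j : Fin m, (X (Sum.inl j) : PP m) • pderiv (Sum.inr j)

def eulerX (m : ℕ) : Derivation ℂ (PP m) (PP m) :=
  ∑ j : Fin m, (X (Sum.inl j) : PP m) • pderiv (Sum.inl j)

def eulerU (m : ℕ) : Derivation ℂ (PP m) (PP m) :=
  ∑ j : Fin m, (X (Sum.inr j) : PP m) • pderiv (Sum.inr j)

theorem udxDerivation_apply (P : PP m) : udxDerivation m P = udx m P := by
  simp [udxDerivation, udx, Derivation.sum_apply]

theorem xduDerivation_apply (P : PP m) : xduDerivation m P = xdu m P := by
  simp [xduDerivation, xdu, Derivation.sum_apply]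

theorem eulerX_apply (P : PP m) :
    eulerX m P = ∑ j : Fin m, X (Sum.inl j) * pderiv (Sum.inl j) P := by
  simp [eulerX, Derivation.sum_apply]

theorem eulerU_apply (P : PP m) :
    eulerU m P = ∑ j : Fin m, X (Sum.inr j) * pderiv (Sum.inr j) P := by
  simp [eulerU, Derivation.sum_apply]

section Generators

variable (i : Fin m)

@[simp] theorem udxDerivation_X_inl : udxDerivation m (X (Sum.inl i)) = X (Sum.inr i) := by
  classical simp [udxDerivation, Derivation.sum_apply, pderiv_X, Pi.single_apply]

@[simp] theorem udxDerivation_X_inr : udxDerivation m (X (Sum.inr i)) = 0 := by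
  classical simp [udxDerivation, Derivation.sum_apply, pderiv_X]

@[simp] theorem xduDerivation_X_inl : xduDerivation m (X (Sum.inl i)) = 0 := by
  classical simp [xduDerivation, Derivation.sum_apply, pderiv_X]

@[simp] theorem xduDerivation_X_inr : xduDerivation m (X (Sum.inr i)) = X (Sum.inl i) := by
  classical simp [xduDerivation, Derivation.sum_apply, pderiv_X, Pi.single_apply]

@[simp] theorem eulerX_X_inl : eulerX m (X (Sum.inl i)) = X (Sum.inl i) := by
  classical simp [eulerX, Derivation.sum_apply, pderiv_X, Pi.single_apply]

@[simp] theorem eulerX_X_inr : eulerX m (X (Sum.inr i)) = 0 := by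
  classical simp [eulerX, Derivation.sum_apply, pderiv_X]

@[simp] theorem eulerU_X_inl : eulerU m (X (Sum.inl i)) = 0 := by
  classical simp [eulerU, Derivation.sum_apply, pderiv_X]

@[simp] theorem eulerU_X_inr : eulerU m (X (Sum.inr i)) = X (Sum.inr i) := by
  classical simp [eulerU, Derivation.sum_apply, pderiv_X, Pi.single_apply]

end Generators

theorem isSl2Triple_xdu_udx (m : ℕ) [NeZero m] :
    IsSl2Triple (eulerX m - eulerU m) (xduDerivation m) (udxDerivation m) where
  h_ne_zero h := by
    simpa using congrArg (· (X (Sum.inl 0))) h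
  lie_e_f := derivation_ext <| by rintro (i | i) <;> simp [Derivation.commutator_apply]
  lie_h_e_nsmul := derivation_ext <| by
    rintro (i | i) <;> simp [Derivation.commutator_apply, two_nsmul]
  lie_h_f_nsmul := derivation_ext <| by
    rintro (i | i) <;> simp [Derivation.commutator_apply, two_nsmul]
    abel

theorem eulerX_apply_of_isWeightedHomogeneous {p : ℕ} {P : PP m}
    (h : P.IsWeightedHomogeneous (Sum.elim (fun _ => 1) (fun _ => 0)) p) :
    eulerX m P = (p : ℂ) • P := by
  simpa [eulerX_apply, Fintype.sum_sum_type, Nat.cast_smul_eq_nsmul] using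
    h.sum_weight_X_mul_pderiv

theorem eulerU_apply_of_isWeightedHomogeneous {q : ℕ} {P : PP m}
    (h : P.IsWeightedHomogeneous (Sum.elim (fun _ => 0) (fun _ => 1)) q) :
    eulerU m P = (q : ℂ) • P := by
  simpa [eulerU_apply, Fintype.sum_sum_type, Nat.cast_smul_eq_nsmul] using
    h.sum_weight_X_mul_pderiv

theorem pderiv_inl_udx (i : Fin m) (P : PP m) :
    pderiv (Sum.inl i) (udx m P) = udx m (pderiv (Sum.inl i) P) := by
  have h : ⁅pderiv (Sum.inl i), udxDerivation m⁆ = 0 := derivation_ext <| by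
    classical
    rintro (j | j) <;> rw [Derivation.commutator_apply] <;>
      simp [pderiv_X, Pi.single_apply, apply_ite]
  have := congrArg (· P) h
  simp only [Derivation.commutator_apply, udxDerivation_apply] at this
  exact sub_eq_zero.mp this

theorem pderiv_inr_udx (i : Fin m) (P : PP m) :
    pderiv (Sum.inr i) (udx m P) = pderiv (Sum.inl i) P + udx m (pderiv (Sum.inr i) P) := by
  have h : ⁅pderiv (Sum.inr i), udxDerivation m⁆ = pderiv (Sum.inl i) := derivation_ext <| by
    classical
    rintro (j | j) <;> rw [Derivation.commutator_apply] <;>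
      simp [pderiv_X, Pi.single_apply, apply_ite]
  have := congrArg (· P) h
  simp only [Derivation.commutator_apply, udxDerivation_apply] at this
  rw [← this, sub_add_cancel]

theorem lapX_udx (P : PP m) : lapX m (udx m P) = udx m (lapX m P) := by
  simp only [lapX, pderiv_inl_udx]
  simp only [← udxDerivation_apply, map_sum]

theorem dudx_udx (P : PP m) : dudx m (udx m P) = udx m (dudx m P) + lapX m P := by
  simp only [dudx, lapX, pderiv_inl_udx, pderiv_inr_udx, Finset.sum_add_distrib]
  simp only [← udxDerivation_apply, map_sum, add_comm]

theorem suIter_eq_iterate_udx {P : PP m} (hlapX : lapX m P = 0) (hdudx : dudx m P = 0)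
    (n : ℕ) (q : ℤ) : SuIter m n q P = (udx m)^[n] P := by
  induction n generalizing q P with
  | zero => rfl
  | succ n ih =>
    have hSu : opSu m q P = udx m P := by simp [opSu, hdudx]
    rw [SuIter, hSu, ih (by rw [lapX_udx, hlapX, ← udxDerivation_apply, map_zero])
      (by rw [dudx_udx, hdudx, hlapX, ← udxDerivation_apply, map_zero, add_zero])]
    rfl

theorem isWeightedHomogeneous_udx {p : ℕ} {P : PP m}
    (h : P.IsWeightedHomogeneous (Sum.elim (fun _ => 1) (fun _ => 0)) (p + 1)) :
    (udx m P).IsWeightedHomogeneous (Sum.elim (fun _ => 1) (fun _ => 0)) p := by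
  refine IsWeightedHomogeneous.sum _ _ _ fun j _ => ?_
  simpa using (isWeightedHomogeneous_X ℂ _ (Sum.inr j)).mul (h.pderiv (i := Sum.inl j) rfl)

theorem iterate_udx_eq_zero {p : ℕ} {P : PP m}
    (h : P.IsWeightedHomogeneous (Sum.elim (fun _ => 1) (fun _ => 0)) p) :
    (udx m)^[p + 1] P = 0 := by
  induction p generalizing P with
  | zero =>
    show udx m P = 0
    exact Finset.sum_eq_zero fun j _ => by rw [h.pderiv_eq_zero (by simp), mul_zero]
  | succ p ih => rw [Function.iterate_succ_apply, ih (isWeightedHomogeneous_udx h)]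

theorem coe_udxDerivation : ⇑(udxDerivation m) = udx m := funext udxDerivation_apply

open LieModule in
theorem toEnd_udxDerivation_pow_apply (n : ℕ) (P : PP m) :
    (toEnd ℂ (Derivation ℂ (PP m) (PP m)) (PP m) (udxDerivation m) ^ n) P = (udx m)^[n] P := by
  rw [Module.End.pow_apply, ← coe_udxDerivation]
  rfl

theorem hasPrimitiveVectorWith_of_isBihom [NeZero m] {k l : ℕ} {H : PP m}
    (hH : IsBihom m k l H) (hxdu : xdu m H = 0) (hne : H ≠ 0) :
    (isSl2Triple_xdu_udx m).HasPrimitiveVectorWith H ((k : ℂ) - l) where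
  ne_zero := hne
  lie_h := by
    simp [sub_smul, eulerX_apply_of_isWeightedHomogeneous hH.1,
      eulerU_apply_of_isWeightedHomogeneous hH.2]
  lie_e := by simp [xduDerivation_apply, hxdu]

theorem suIter_eq_zero_of_isSimp [NeZero m] {k l : ℕ} (hkl : l ≤ k) {H : PP m}
    (hH : IsSimp m k l H) : SuIter m (k - l + 1) l H = 0 := by
  rw [suIter_eq_iterate_udx hH.2.1 hH.2.2.2.1, ← toEnd_udxDerivation_pow_apply]
  rcases eq_or_ne H 0 with rfl | hne
  · simp
  have P := hasPrimitiveVectorWith_of_isBihom hH.1 hH.2.2.2.2 hne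
  refine P.pow_toEnd_f_eq_zero_of_eq_nat_of_pow_toEnd_f_eq_zero (n := k - l) (N := k + 1)
    (by push_cast [hkl]; rfl) ?_
  rw [toEnd_udxDerivation_pow_apply, iterate_udx_eq_zero hH.1.1]

section NullPlanes

variable (e : Fin 2 × Fin 2 ↪ Fin m)

/- `x_{e(p,0)} + i x_{e(p,1)}` (for `ι = Sum.inl`) is `⟨a_p, x⟩` for the isotropic vector
`a_p = e_{e(p,0)} + i e_{e(p,1)}`; `a₀` and `a₁` are orthogonal. -/
def nullForm (ι : Fin m → Fin m ⊕ Fin m) (p : Fin 2) : PP m :=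
  X (ι (e (p, 0))) + Complex.I • X (ι (e (p, 1)))

/- The polynomials whose gradient in the variables `ι` lies in the span of `a₀, a₁`, described
by first-order relations, i.e. as the common kernel of some derivations. -/
def nullSubalgebraOn (ι : Fin m → Fin m ⊕ Fin m) : Subalgebra ℂ (PP m) :=
  (⨅ p : Fin 2, Derivation.kerSubalgebra (pderiv (ι (e (p, 1))) -
    Complex.I • pderiv (ι (e (p, 0))) : Derivation ℂ (PP m) (PP m))) ⊓
    ⨅ (j) (_ : j ∉ Set.range e), (pderiv (ι j)).kerSubalgebra

def nullSubalgebra : Subalgebra ℂ (PP m) :=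
  nullSubalgebraOn e Sum.inl ⊓ nullSubalgebraOn e Sum.inr

variable {e}

theorem mem_nullSubalgebraOn {ι : Fin m → Fin m ⊕ Fin m} {P : PP m} :
    P ∈ nullSubalgebraOn e ι ↔
      (∀ p, pderiv (ι (e (p, 1))) P = Complex.I • pderiv (ι (e (p, 0))) P) ∧
        ∀ j ∉ Set.range e, pderiv (ι j) P = 0 := by
  simp [nullSubalgebraOn, Derivation.kerSubalgebra, Algebra.mem_inf, Algebra.mem_iInf,
    sub_eq_zero]

theorem sum_pderiv_pderiv_eq_zero {ι ι' : Fin m → Fin m ⊕ Fin m} {P : PP m}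
    (hP : P ∈ nullSubalgebraOn e ι) (hP' : P ∈ nullSubalgebraOn e ι') :
    ∑ j, pderiv (ι' j) (pderiv (ι j) P) = 0 := by
  rw [mem_nullSubalgebraOn] at hP hP'
  rw [← Fintype.sum_of_injective e e.injective _ _
    (fun j hj => by rw [hP.2 j hj, map_zero]) (fun _ => rfl)]
  simp [Fintype.sum_prod_type, Fin.sum_univ_two, pderiv_pderiv_eq_neg (hP.1 _) (hP'.1 _)]

variable {P : PP m}

theorem lapX_eq_zero_of_mem_nullSubalgebra (hP : P ∈ nullSubalgebra e) : lapX m P = 0 :=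
  sum_pderiv_pderiv_eq_zero hP.1 hP.1

theorem lapU_eq_zero_of_mem_nullSubalgebra (hP : P ∈ nullSubalgebra e) : lapU m P = 0 :=
  sum_pderiv_pderiv_eq_zero hP.2 hP.2

theorem dudx_eq_zero_of_mem_nullSubalgebra (hP : P ∈ nullSubalgebra e) : dudx m P = 0 :=
  sum_pderiv_pderiv_eq_zero hP.1 hP.2

theorem nullForm_mem_nullSubalgebra {ι : Fin m → Fin m ⊕ Fin m}
    (hι : ι = Sum.inl ∨ ι = Sum.inr) (p : Fin 2) : nullForm e ι p ∈ nullSubalgebra e := by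
  classical
  rcases hι with rfl | rfl <;>
    simp [nullSubalgebra, mem_nullSubalgebraOn, nullForm, pderiv_X, Pi.single_apply,
      e.injective.eq_iff]
  all_goals intro j h₀₀ h₀₁ h₁₀ h₁₁; fin_cases p <;> simp [*]

end NullPlanes

section Witness

variable (e : Fin 2 × Fin 2 ↪ Fin m)

def nullMinor : PP m :=
  nullForm e Sum.inl 0 * nullForm e Sum.inr 1 - nullForm e Sum.inl 1 * nullForm e Sum.inr 0

def nullPoint : Fin m ⊕ Fin m → ℂ :=
  Sum.elim (Pi.single (e (0, 0)) 1) (Pi.single (e (0, 0)) 1 + Pi.single (e (1, 0)) 1)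

variable {e}

@[simp] theorem udxDerivation_nullForm_inl (p : Fin 2) :
    udxDerivation m (nullForm e Sum.inl p) = nullForm e Sum.inr p := by
  simp [nullForm]

@[simp] theorem udxDerivation_nullForm_inr (p : Fin 2) :
    udxDerivation m (nullForm e Sum.inr p) = 0 := by
  simp [nullForm]

@[simp] theorem xduDerivation_nullForm_inl (p : Fin 2) :
    xduDerivation m (nullForm e Sum.inl p) = 0 := by
  simp [nullForm]

@[simp] theorem xduDerivation_nullForm_inr (p : Fin 2) :
    xduDerivation m (nullForm e Sum.inr p) = nullForm e Sum.inl p := by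
  simp [nullForm]

@[simp] theorem udxDerivation_nullMinor : udxDerivation m (nullMinor e) = 0 := by
  simp [nullMinor, Derivation.leibniz]
  ring

@[simp] theorem xduDerivation_nullMinor : xduDerivation m (nullMinor e) = 0 := by
  simp [nullMinor, Derivation.leibniz]
  ring

theorem nullMinor_mem_nullSubalgebra : nullMinor e ∈ nullSubalgebra e := by
  have hA (p : Fin 2) := nullForm_mem_nullSubalgebra (e := e) (.inl rfl) p
  have hα (p : Fin 2) := nullForm_mem_nullSubalgebra (e := e) (.inr rfl) p
  exact sub_mem (mul_mem (hA 0) (hα 1)) (mul_mem (hA 1) (hα 0))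

theorem isWeightedHomogeneous_nullForm {ι : Fin m → Fin m ⊕ Fin m}
    {w : Fin m ⊕ Fin m → ℕ} {d : ℕ} (hw : ∀ j, w (ι j) = d) (p : Fin 2) :
    (nullForm e ι p).IsWeightedHomogeneous w d := by
  have hX (j : Fin m) : (X (ι j) : PP m).IsWeightedHomogeneous w d :=
    hw j ▸ isWeightedHomogeneous_X ℂ w (ι j)
  exact (hX _).add ((weightedHomogeneousSubmodule ℂ w d).smul_mem Complex.I (hX _))

theorem isWeightedHomogeneous_nullMinor {w : Fin m ⊕ Fin m → ℕ} {a b : ℕ}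
    (ha : ∀ j, w (Sum.inl j) = a) (hb : ∀ j, w (Sum.inr j) = b) :
    (nullMinor e).IsWeightedHomogeneous w (a + b) :=
  (weightedHomogeneousSubmodule ℂ w (a + b)).sub_mem
    ((isWeightedHomogeneous_nullForm ha 0).mul (isWeightedHomogeneous_nullForm hb 1))
    ((isWeightedHomogeneous_nullForm ha 1).mul (isWeightedHomogeneous_nullForm hb 0))

theorem isBihom_nullForm_pow_mul_nullMinor_pow (n l : ℕ) :
    IsBihom m (n + l) l (nullForm e Sum.inl 0 ^ n * nullMinor e ^ l) := by
  constructor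
  · simpa using ((isWeightedHomogeneous_nullForm (d := 1) (fun _ => rfl) 0).pow n).mul
      ((isWeightedHomogeneous_nullMinor (a := 1) (b := 0) (fun _ => rfl) (fun _ => rfl)).pow l)
  · simpa using ((isWeightedHomogeneous_nullForm (d := 0) (fun _ => rfl) 0).pow n).mul
      ((isWeightedHomogeneous_nullMinor (a := 0) (b := 1) (fun _ => rfl) (fun _ => rfl)).pow l)

theorem isSimp_nullForm_pow_mul_nullMinor_pow (n l : ℕ) :
    IsSimp m (n + l) l (nullForm e Sum.inl 0 ^ n * nullMinor e ^ l) := by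
  have hmem : nullForm e Sum.inl 0 ^ n * nullMinor e ^ l ∈ nullSubalgebra e :=
    mul_mem (pow_mem (nullForm_mem_nullSubalgebra (.inl rfl) 0) n)
      (pow_mem nullMinor_mem_nullSubalgebra l)
  refine ⟨isBihom_nullForm_pow_mul_nullMinor_pow n l, lapX_eq_zero_of_mem_nullSubalgebra hmem,
    lapU_eq_zero_of_mem_nullSubalgebra hmem, dudx_eq_zero_of_mem_nullSubalgebra hmem, ?_⟩
  simp [← xduDerivation_apply, Derivation.leibniz, Derivation.leibniz_pow]

theorem iterate_udx_nullForm_pow_mul_nullMinor_pow (n l j : ℕ) :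
    (udx m)^[j] (nullForm e Sum.inl 0 ^ n * nullMinor e ^ l) =
      n.descFactorial j •
        (nullForm e Sum.inr 0 ^ j * nullForm e Sum.inl 0 ^ (n - j) * nullMinor e ^ l) := by
  rw [← coe_udxDerivation]
  exact (udxDerivation m).iterate_apply_pow_mul (udxDerivation_nullForm_inl 0)
    (udxDerivation_nullForm_inr 0) (by simp [Derivation.leibniz_pow]) n j

theorem eval_nullPoint_nullForm_pow_mul_nullMinor_pow (a b c : ℕ) :
    eval (nullPoint e)
      (nullForm e Sum.inr 0 ^ a * nullForm e Sum.inl 0 ^ b * nullMinor e ^ c) = 1 := by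
  simp [nullPoint, nullMinor, nullForm, e.injective.eq_iff]

theorem exists_isSimp_suIter_ne_zero (e : Fin 2 × Fin 2 ↪ Fin m) {k l j : ℕ} (hkl : l ≤ k)
    (hj : j ≤ k - l) : ∃ H : PP m, IsSimp m k l H ∧ SuIter m j l H ≠ 0 := by
  obtain ⟨n, rfl⟩ : ∃ n, k = n + l := ⟨k - l, by omega⟩
  have hH := isSimp_nullForm_pow_mul_nullMinor_pow (e := e) n l
  refine ⟨_, hH, fun h => ?_⟩
  rw [suIter_eq_iterate_udx hH.2.1 hH.2.2.2.1, iterate_udx_nullForm_pow_mul_nullMinor_pow] at h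
  have := congrArg (eval (nullPoint e)) h
  simp [eval_nullPoint_nullForm_pow_mul_nullMinor_pow, Nat.descFactorial_eq_zero_iff_lt] at this
  omega

end Witness

/-- `S_u^{k−l+1}` annihilates the simplicial harmonics `ℋ_{k,l}`,
while `S_u^j` is non-trivial on `ℋ_{k,l}` for all `j ≤ k − l`. -/
theorem stmt_6 (m k l : ℕ) (hm : 4 < m) (hkl : l ≤ k) :
    (∀ H : PP m, IsSimp m k l H → SuIter m (k - l + 1) (l : ℤ) H = 0) ∧
    (∀ j : ℕ, j ≤ k - l → ∃ H : PP m, IsSimp m k l H ∧ SuIter m j (l : ℤ) H ≠ 0) := by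
  have : NeZero m := ⟨by omega⟩
  let e : Fin 2 × Fin 2 ↪ Fin m := finProdFinEquiv.toEmbedding.trans (Fin.castLEEmb (by omega))
  exact ⟨fun H hH => suIter_eq_zero_of_isSimp hkl hH,
    fun j hj => exists_isSimp_suIter_ne_zero e hkl hj⟩
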